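/- Let C be a positive semidefinite t×t matrix with maximal singular value ς_C := ‖C‖₂ (spectral norm), and write ‖s‖_C := √(sᵀCs). Then for every t ≥ 1 and all x, x' ∈ 𝒳: (i) |ρ‖h_t(x)‖₂ − ρ‖h_t(x')‖₂| ≤ √(L/2)·‖x − x'‖^{p/2}; (ii) |ρ‖h_t(x)‖_∞ − ρ‖h_t(x')‖_∞| ≤ √(L/2)·‖x − x'‖^{p/2}; (iii) |ρ‖h_t(x)‖_C − ρ‖h_t(x')‖_C| ≤ √(ς_C·L/2)·‖x − x'‖^{p/2}. -/

import Mathlib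

open MeasureTheory ProbabilityTheory Matrix Real
open scoped BigOperators ENNReal NNReal

noncomputable section

namespace KRR

/-- Euclidean 2-norm on `Fin t → ℝ`. -/
def twoNorm {t : ℕ} (v : Fin t → ℝ) : ℝ := Real.sqrt (∑ i, v i ^ 2)

/-- Maximum norm on `Fin t → ℝ` (the sup norm of the Pi type). -/
def supNorm {t : ℕ} (v : Fin t → ℝ) : ℝ := ‖v‖

/-- Weighted norm `‖s‖_C = √(sᵀ C s)`. -/
def wNorm {t : ℕ} (C : Matrix (Fin t) (Fin t) ℝ) (v : Fin t → ℝ) : ℝ :=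
  Real.sqrt (v ⬝ᵥ C.mulVec v)

/-- Spectral norm (maximal singular value, ℓ²-operator norm) of a square real matrix. -/
def specNorm {t : ℕ} (C : Matrix (Fin t) (Fin t) ℝ) : ℝ :=
  ‖LinearMap.toContinuousLinearMap (Matrix.toEuclideanLin C)‖

/-- Covering number of `X ⊆ ℝ^n` with grid constant `ζ`: the minimal cardinality of a
finite subset of `X` such that every point of `X` is within distance `ζ` of it. -/
def covN {n : ℕ} (X : Set (EuclideanSpace ℝ (Fin n))) (ζ : ℝ) : ℕ :=
  sInf {m | ∃ S : Finset (EuclideanSpace ℝ (Fin n)), ↑S ⊆ X ∧ S.card = m ∧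
    ∀ x ∈ X, ∃ y ∈ S, ‖x - y‖ ≤ ζ}

variable {E : Type*} {H : Type*} [NormedAddCommGroup H] [InnerProductSpace ℝ H]

/-- The kernel `k(x,x') = ⟪φ(x), φ(x')⟫`. -/
def ker (φ : E → H) (x y : E) : ℝ := inner ℝ (φ x) (φ y)

/-- Gram matrix `K_t`. -/
def gram (φ : E → H) (xs : ℕ → E) (t : ℕ) : Matrix (Fin t) (Fin t) ℝ :=
  Matrix.of fun i j => ker φ (xs i) (xs j)

/-- The vector `k_t(x)`. -/
def kvec (φ : E → H) (xs : ℕ → E) (t : ℕ) (x : E) : Fin t → ℝ :=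
  fun i => ker φ (xs i) x

/-- `h_t(x) = (K_t + ρ²I)⁻¹ k_t(x)`. -/
def hvec (φ : E → H) (xs : ℕ → E) (ρ : ℝ) (t : ℕ) (x : E) : Fin t → ℝ :=
  (gram φ xs t + ρ ^ 2 • (1 : Matrix (Fin t) (Fin t) ℝ))⁻¹ *ᵥ kvec φ xs t x

/-- Posterior variance `σ_t²(x) = k(x,x) − k_t(x)ᵀ(K_t+ρ²I)⁻¹k_t(x)`. -/
def postVar (φ : E → H) (xs : ℕ → E) (ρ : ℝ) (t : ℕ) (x : E) : ℝ :=
  ker φ x x - kvec φ xs t x ⬝ᵥ hvec φ xs ρ t x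

/-- `σ̃_t(x) = √(σ_t²(x) − ρ²‖h_t(x)‖₂²)`. -/
def sigTilde (φ : E → H) (xs : ℕ → E) (ρ : ℝ) (t : ℕ) (x : E) : ℝ :=
  Real.sqrt (postVar φ xs ρ t x - ρ ^ 2 * twoNorm (hvec φ xs ρ t x) ^ 2)

/-- The unknown function `f(x) = ⟪w, φ(x)⟫`. -/
def ffun (φ : E → H) (w : H) (x : E) : ℝ := inner ℝ w (φ x)

/-- The KRR estimate `μ_t(x) = Σᵢ Yᵢ (h_t(x))ᵢ` with `Yᵢ = f(xᵢ) + Mᵢ`. -/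
def muEst {Ω : Type*} (φ : E → H) (xs : ℕ → E) (ρ : ℝ) (w : H)
    (M : ℕ → Ω → ℝ) (t : ℕ) (x : E) (ω : Ω) : ℝ :=
  ∑ i : Fin t, (ffun φ w (xs i) + M i ω) * hvec φ xs ρ t x i

/-- `β_{1,t} = 2 ln(4 π_t Z(ζ_t,X)/δ)`. -/
def beta1 {n : ℕ} (X : Set (EuclideanSpace ℝ (Fin n))) (pis ζ : ℕ → ℝ) (δ : ℝ) (t : ℕ) : ℝ :=
  2 * Real.log (4 * pis t * (covN X (ζ t) : ℝ) / δ)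

/-- `β_{2,t} = 2 ln(4 π_t t/δ)`. -/
def beta2 (pis : ℕ → ℝ) (δ : ℝ) (t : ℕ) : ℝ :=
  2 * Real.log (4 * pis t * (t : ℝ) / δ)

/-- `a_{1,t} = √(L/(2ρ²)) ζ_t^{p/2}`. -/
def a1 (L ρ p : ℝ) (ζ : ℕ → ℝ) (t : ℕ) : ℝ :=
  Real.sqrt (L / (2 * ρ ^ 2)) * ζ t ^ (p / 2)

/-- `a_{2,t} = t L ζ_t^p`. -/
def a2 (L p : ℝ) (ζ : ℕ → ℝ) (t : ℕ) : ℝ :=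
  (t : ℝ) * L * ζ t ^ p

/-- `Δ_t(σ) = √(β_{1,t}) σ a_{1,t} + √(β_{2,t}) σ a_{2,t}`. -/
def Δt {n : ℕ} (X : Set (EuclideanSpace ℝ (Fin n))) (pis ζ : ℕ → ℝ) (δ L ρ p : ℝ)
    (t : ℕ) (σ : ℝ) : ℝ :=
  Real.sqrt (beta1 X pis ζ δ t) * σ * a1 L ρ p ζ t + Real.sqrt (beta2 pis δ t) * σ * a2 L p ζ t

/-!
With `ψ = φ x - φ x'`, the difference `d = h_t(x) - h_t(x')` solves `(K_t + ρ²I) d = (⟪φ(xᵢ), ψ⟫)ᵢ`.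
Testing this against `d` and writing `a = ‖∑ dᵢ φ(xᵢ)‖` gives
`a² + ρ²‖d‖₂² = ⟪∑ dᵢ φ(xᵢ), ψ⟫ ≤ a ‖ψ‖`, hence `ρ‖d‖₂ ≤ ‖ψ‖ / 2`
since `a ‖ψ‖ - a² ≤ ‖ψ‖² / 4`. Expanding
`‖ψ‖² = (k(x,x) - k(x,x')) + (k(x',x') - k(x',x)) ≤ 2L‖x - x'‖^p` bounds the right-hand side.
Finally `‖·‖₂` and `‖·‖_∞` are 1-Lipschitz for `‖·‖₂`, and `‖s‖_C = ‖C^{1/2} s‖₂` is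
`√ς_C`-Lipschitz.
-/

open scoped InnerProductSpace

section Norms

variable {t : ℕ}

lemma twoNorm_eq_norm_toLp (v : Fin t → ℝ) : twoNorm v = ‖WithLp.toLp 2 v‖ := by
  simp [twoNorm, EuclideanSpace.norm_eq]

lemma twoNorm_nonneg (v : Fin t → ℝ) : 0 ≤ twoNorm v :=
  Real.sqrt_nonneg _

lemma abs_twoNorm_sub_twoNorm_le (u v : Fin t → ℝ) :
    |twoNorm u - twoNorm v| ≤ twoNorm (u - v) := by
  simpa only [twoNorm_eq_norm_toLp, WithLp.toLp_sub] using abs_norm_sub_norm_le _ _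

lemma norm_le_twoNorm (v : Fin t → ℝ) : ‖v‖ ≤ twoNorm v :=
  (pi_norm_le_iff_of_nonneg (twoNorm_nonneg v)).mpr fun i => by
    simpa [twoNorm_eq_norm_toLp] using PiLp.norm_apply_le (WithLp.toLp 2 v) i

lemma abs_supNorm_sub_supNorm_le (u v : Fin t → ℝ) :
    |supNorm u - supNorm v| ≤ twoNorm (u - v) :=
  (abs_norm_sub_norm_le u v).trans (norm_le_twoNorm _)

lemma specNorm_nonneg (C : Matrix (Fin t) (Fin t) ℝ) : 0 ≤ specNorm C :=
  norm_nonneg _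

lemma wNorm_le_sqrt_specNorm_mul_twoNorm (C : Matrix (Fin t) (Fin t) ℝ) (v : Fin t → ℝ) :
    wNorm C v ≤ √(specNorm C) * twoNorm v := by
  have hCv : ‖WithLp.toLp 2 (C *ᵥ v)‖ ≤ specNorm C * ‖WithLp.toLp 2 v‖ :=
    (LinearMap.toContinuousLinearMap (toEuclideanLin C)).le_opNorm _
  have hquad : v ⬝ᵥ C *ᵥ v ≤ specNorm C * twoNorm v ^ 2 :=
    calc v ⬝ᵥ C *ᵥ v = ⟪WithLp.toLp 2 v, WithLp.toLp 2 (C *ᵥ v)⟫_ℝ := by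
          simp [PiLp.inner_apply, dotProduct, mul_comm]
      _ ≤ ‖WithLp.toLp 2 v‖ * (specNorm C * ‖WithLp.toLp 2 v‖) :=
          (real_inner_le_norm _ _).trans (mul_le_mul_of_nonneg_left hCv (norm_nonneg _))
      _ = specNorm C * twoNorm v ^ 2 := by rw [twoNorm_eq_norm_toLp]; ring
  calc wNorm C v ≤ √(specNorm C * twoNorm v ^ 2) := Real.sqrt_le_sqrt hquad
    _ = √(specNorm C) * twoNorm v := by
      rw [Real.sqrt_mul (specNorm_nonneg C), Real.sqrt_sq (twoNorm_nonneg v)]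

open scoped MatrixOrder in
lemma wNorm_eq_twoNorm_sqrt_mulVec {C : Matrix (Fin t) (Fin t) ℝ} (hC : C.PosSemidef)
    (v : Fin t → ℝ) : wNorm C v = twoNorm (CFC.sqrt C *ᵥ v) := by
  have hS : (CFC.sqrt C).IsHermitian := IsSelfAdjoint.of_nonneg (CFC.sqrt_nonneg C)
  rw [wNorm, twoNorm]
  nth_rw 1 [← CFC.sqrt_mul_sqrt_self C hC.nonneg]
  rw [← mulVec_mulVec, dotProduct_mulVec,
    ← mulVec_transpose, ← conjTranspose_eq_transpose_of_trivial, hS.eq]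
  simp only [dotProduct, sq]

lemma abs_wNorm_sub_wNorm_le {C : Matrix (Fin t) (Fin t) ℝ} (hC : C.PosSemidef)
    (u v : Fin t → ℝ) : |wNorm C u - wNorm C v| ≤ wNorm C (u - v) := by
  simpa only [wNorm_eq_twoNorm_sqrt_mulVec hC, mulVec_sub] using abs_twoNorm_sub_twoNorm_le _ _

end Norms

section RegularizedGram

variable {t : ℕ}

lemma posDef_gram_add_smul_one (g : Fin t → H) {ρ : ℝ} (hρ : ρ ≠ 0) :
    (Matrix.gram ℝ g + ρ ^ 2 • (1 : Matrix (Fin t) (Fin t) ℝ)).PosDef :=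
  PosDef.posSemidef_add (posSemidef_gram ℝ g) (PosDef.one.smul (by positivity))

theorem mul_twoNorm_gram_add_smul_one_inv_mulVec_le (g : Fin t → H) (ψ : H) {ρ : ℝ}
    (hρ : 0 < ρ) :
    ρ * twoNorm ((Matrix.gram ℝ g + ρ ^ 2 • (1 : Matrix (Fin t) (Fin t) ℝ))⁻¹ *ᵥ
      fun i => ⟪g i, ψ⟫_ℝ) ≤ ‖ψ‖ / 2 := by
  set A := Matrix.gram ℝ g + ρ ^ 2 • (1 : Matrix (Fin t) (Fin t) ℝ) with hA
  set b : Fin t → ℝ := fun i => ⟪g i, ψ⟫_ℝ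
  set d := A⁻¹ *ᵥ b
  set a := ‖∑ i, d i • g i‖
  have hAd : A *ᵥ d = b := by
    rw [mulVec_mulVec, mul_nonsing_inv A (posDef_gram_add_smul_one g hρ.ne').det_pos.ne'.isUnit,
      one_mulVec]
  have hgram : d ⬝ᵥ Matrix.gram ℝ g *ᵥ d = a ^ 2 := by
    simpa [a, real_inner_self_eq_norm_sq] using star_dotProduct_gram_mulVec (𝕜 := ℝ) g d d
  have hquad : d ⬝ᵥ A *ᵥ d = a ^ 2 + ρ ^ 2 * twoNorm d ^ 2 := by
    rw [hA, add_mulVec, dotProduct_add, smul_mulVec, one_mulVec, dotProduct_smul, hgram, twoNorm,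
      Real.sq_sqrt (by positivity)]
    simp [dotProduct, sq]
  have hlin : d ⬝ᵥ b = ⟪∑ i, d i • g i, ψ⟫_ℝ := by
    simp [b, dotProduct, sum_inner, real_inner_smul_left]
  have hcs : a ^ 2 + ρ ^ 2 * twoNorm d ^ 2 ≤ a * ‖ψ‖ := by
    rw [← hquad, hAd, hlin]
    exact real_inner_le_norm _ _
  have hsq : (ρ * twoNorm d) ^ 2 ≤ (‖ψ‖ / 2) ^ 2 := by
    nlinarith [sq_nonneg (a - ‖ψ‖ / 2)]
  exact (pow_le_pow_iff_left₀ (mul_nonneg hρ.le (twoNorm_nonneg d)) (by positivity)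
    two_ne_zero).mp hsq

end RegularizedGram

lemma hvec_sub_hvec (φ : E → H) (xs : ℕ → E) (ρ : ℝ) (t : ℕ) (x x' : E) :
    hvec φ xs ρ t x - hvec φ xs ρ t x' =
      (Matrix.gram ℝ (fun i : Fin t => φ (xs i)) + ρ ^ 2 • (1 : Matrix (Fin t) (Fin t) ℝ))⁻¹ *ᵥ
        fun i => ⟪φ (xs i), φ x - φ x'⟫_ℝ := by
  rw [hvec, hvec, ← mulVec_sub]
  congr 1
  ext i
  simp [kvec, ker, inner_sub_right]

lemma mul_twoNorm_hvec_sub_hvec_le (φ : E → H) (xs : ℕ → E) {ρ : ℝ} (hρ : 0 < ρ) (t : ℕ)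
    (x x' : E) : ρ * twoNorm (hvec φ xs ρ t x - hvec φ xs ρ t x') ≤ ‖φ x - φ x'‖ / 2 := by
  rw [hvec_sub_hvec]
  exact mul_twoNorm_gram_add_smul_one_inv_mulVec_le _ _ hρ

lemma norm_sub_sq_eq_ker (φ : E → H) (x x' : E) :
    ‖φ x - φ x'‖ ^ 2 = (ker φ x x - ker φ x x') + (ker φ x' x' - ker φ x' x) := by
  rw [← real_inner_self_eq_norm_sq, inner_sub_left, inner_sub_right, inner_sub_right]
  simp only [ker]
  ring

lemma half_norm_sub_le_of_holder [SeminormedAddCommGroup E] {φ : E → H} {X : Set E} {p L : ℝ}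
    (hHolder : ∀ x ∈ X, ∀ x' ∈ X, ∀ x'' ∈ X, |ker φ x x' - ker φ x x''| ≤ L * ‖x' - x''‖ ^ p)
    {x x' : E} (hx : x ∈ X) (hx' : x' ∈ X) :
    ‖φ x - φ x'‖ / 2 ≤ √(L / 2) * ‖x - x'‖ ^ (p / 2) := by
  have hsq : (‖φ x - φ x'‖ / 2) ^ 2 ≤ L / 2 * ‖x - x'‖ ^ p := by
    have h₁ := (abs_le.mp (hHolder x hx x hx x' hx')).2
    have h₂ := (abs_le.mp (hHolder x' hx' x' hx' x hx)).2
    rw [norm_sub_rev x' x] at h₂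
    nlinarith [norm_sub_sq_eq_ker φ x x']
  calc ‖φ x - φ x'‖ / 2 ≤ √(L / 2 * ‖x - x'‖ ^ p) := Real.le_sqrt_of_sq_le hsq
    _ = √(L / 2) * ‖x - x'‖ ^ (p / 2) := by
      rw [Real.sqrt_mul' _ (by positivity), Real.sqrt_eq_rpow (‖x - x'‖ ^ p),
        ← Real.rpow_mul (norm_nonneg _)]
      ring_nf

theorem stmt12_general
    {nx : ℕ}
    (X : Set (EuclideanSpace ℝ (Fin nx)))
    {H : Type*} [NormedAddCommGroup H] [InnerProductSpace ℝ H]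
    (φ : EuclideanSpace ℝ (Fin nx) → H)
    (xs : ℕ → EuclideanSpace ℝ (Fin nx))
    (ρ : ℝ) (hρ : 0 < ρ)
    (p : ℝ) (L : ℝ)
    (hHolder : ∀ x ∈ X, ∀ x' ∈ X, ∀ x'' ∈ X,
      |ker φ x x' - ker φ x x''| ≤ L * ‖x' - x''‖ ^ p) :
    ∀ t : ℕ, 1 ≤ t → ∀ x ∈ X, ∀ x' ∈ X,
      (|ρ * twoNorm (hvec φ xs ρ t x) - ρ * twoNorm (hvec φ xs ρ t x')| ≤
          Real.sqrt (L / 2) * ‖x - x'‖ ^ (p / 2)) ∧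
      (|ρ * supNorm (hvec φ xs ρ t x) - ρ * supNorm (hvec φ xs ρ t x')| ≤
          Real.sqrt (L / 2) * ‖x - x'‖ ^ (p / 2)) ∧
      (∀ C : Matrix (Fin t) (Fin t) ℝ, C.PosSemidef →
        |ρ * wNorm C (hvec φ xs ρ t x) - ρ * wNorm C (hvec φ xs ρ t x')| ≤
          Real.sqrt (specNorm C * L / 2) * ‖x - x'‖ ^ (p / 2)) := by
  intro t _ x hx x' hx'
  set δ := twoNorm (hvec φ xs ρ t x - hvec φ xs ρ t x')
  set B := √(L / 2) * ‖x - x'‖ ^ (p / 2)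
  have hδ : ρ * δ ≤ B :=
    (mul_twoNorm_hvec_sub_hvec_le φ xs hρ t x x').trans (half_norm_sub_le_of_holder hHolder hx hx')
  have scale : ∀ {c a b : ℝ}, 0 ≤ c → |a - b| ≤ c * δ → |ρ * a - ρ * b| ≤ c * B :=
    fun {c a b} hc hab => by
      rw [← mul_sub, abs_mul, abs_of_pos hρ]
      calc ρ * |a - b| ≤ ρ * (c * δ) := mul_le_mul_of_nonneg_left hab hρ.le
        _ = c * (ρ * δ) := by ring
        _ ≤ c * B := mul_le_mul_of_nonneg_left hδ hc
  refine ⟨?_, ?_, fun C hC => ?_⟩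
  · simpa using scale zero_le_one (by simpa using abs_twoNorm_sub_twoNorm_le _ _)
  · simpa using scale zero_le_one (by simpa using abs_supNorm_sub_supNorm_le _ _)
  · rw [mul_div_assoc, Real.sqrt_mul (specNorm_nonneg C), mul_assoc]
    exact scale (Real.sqrt_nonneg _)
      ((abs_wNorm_sub_wNorm_le hC _ _).trans (wNorm_le_sqrt_specNorm_mul_twoNorm C _))

/-- Lemma 2: Hölder continuity of `ρ‖h_t(·)‖₂`, `ρ‖h_t(·)‖_∞` and
`ρ‖h_t(·)‖_C` for positive semidefinite `C`. -/
theorem stmt12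
    {nx : ℕ} (hnx : 1 ≤ nx)
    (X : Set (EuclideanSpace ℝ (Fin nx))) (hXne : X.Nonempty) (hXcpt : IsCompact X)
    {H : Type*} [NormedAddCommGroup H] [InnerProductSpace ℝ H] [CompleteSpace H]
    (φ : EuclideanSpace ℝ (Fin nx) → H)
    (xs : ℕ → EuclideanSpace ℝ (Fin nx)) (hxs : ∀ i, xs i ∈ X)
    (ρ : ℝ) (hρ : 0 < ρ)
    (p : ℝ) (hp : p ∈ Set.Ioc (0 : ℝ) 1) (L : ℝ) (hL : 0 ≤ L)
    (hHolder : ∀ x ∈ X, ∀ x' ∈ X, ∀ x'' ∈ X,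
      |ker φ x x' - ker φ x x''| ≤ L * ‖x' - x''‖ ^ p) :
    ∀ t : ℕ, 1 ≤ t → ∀ x ∈ X, ∀ x' ∈ X,
      (|ρ * twoNorm (hvec φ xs ρ t x) - ρ * twoNorm (hvec φ xs ρ t x')| ≤
          Real.sqrt (L / 2) * ‖x - x'‖ ^ (p / 2)) ∧
      (|ρ * supNorm (hvec φ xs ρ t x) - ρ * supNorm (hvec φ xs ρ t x')| ≤
          Real.sqrt (L / 2) * ‖x - x'‖ ^ (p / 2)) ∧
      (∀ C : Matrix (Fin t) (Fin t) ℝ, C.PosSemidef →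
        |ρ * wNorm C (hvec φ xs ρ t x) - ρ * wNorm C (hvec φ xs ρ t x')| ≤
          Real.sqrt (specNorm C * L / 2) * ‖x - x'‖ ^ (p / 2)) :=
  stmt12_general X φ xs ρ hρ p L hHolder

end KRR
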